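/- arXiv:0908.3266 — 4 statements merged into one kernel-verified Lean document; each statement's English description precedes it below -/
import Mathlib

section
/- Let d ≥ 2 be even, q a power of an odd prime, a_1,…,a_d ∈ F_q nonzero, and S = {x ∈ F_q^d : ∑ a_j x_j² = 0}. For m ∈ F_q^d define (dσ)^∨(m) = |S|^{−1} ∑_{x∈S} χ(x·m). Then: (dσ)^∨(0) = q^{d−1}/|S| + (G^d/|S|)(1−q^{−1})η(a_1⋯a_d); if m ≠ 0 and ∑_j m_j²/a_j = 0 then (dσ)^∨(m) = (G^d/|S|)(1−q^{−1})η(a_1⋯a_d); and if ∑_j m_j²/a_j ≠ 0 then (dσ)^∨(m) = −(G^d/(q|S|))η(a_1⋯a_d). -/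
open Finset BigOperators
open scoped Classical

/-!
Detect the quadric `Q(x) = ∑ a_j x_j² = 0` by orthogonality of `χ`:
`q · ∑_{x ∈ S} χ(x·m) = ∑_{t ∈ F} ∑_{x ∈ F^d} χ(t Q(x) + x·m)`.
The term `t = 0` is `q^d [m = 0]`. For `t ≠ 0` the inner sum splits over the coordinates into
one-variable sums, which completing the square evaluates as `η(t a_j) G χ(-m_j² / (4 t a_j))`;
as `d` is even the factors `η(t)` cancel, leaving `G^d η(a_1⋯a_d) χ(-c / (4t))` with
`c = ∑ m_j² / a_j`. Finally `∑_{t ≠ 0} χ(-c / (4t))` is `q - 1` or `-1` according as `c = 0` or not.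
-/

/-- The quadratic character of a finite field, valued in `ℂ`. -/
noncomputable def quadChar {F : Type} [Field F] (t : F) : ℂ :=
  if t = 0 then 0 else if IsSquare t then 1 else -1

/-- The Gauss sum `G = ∑_{s ≠ 0} η(s) χ(s)` (note `η(0) = 0`). -/
noncomputable def gaussSumQuad {F : Type} [Field F] [Fintype F] (χ : AddChar F ℂ) : ℂ :=
  ∑ s : F, quadChar s * χ s

noncomputable def complexQuadraticChar (F : Type) [Field F] [Fintype F] : MulChar F ℂ :=
  (quadraticChar F).ringHomComp (Int.castRingHom ℂ)

lemma AddChar.map_sum_eq_prod {A M ι : Type*} [AddCommMonoid A] [CommMonoid M]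
    (ψ : AddChar A M) (s : Finset ι) (f : ι → A) :
    ψ (∑ i ∈ s, f i) = ∏ i ∈ s, ψ (f i) := by
  induction s using Finset.cons_induction with
  | empty => simp
  | cons i s hi ih => rw [sum_cons, prod_cons, AddChar.map_add_eq_mul, ih]

lemma AddChar.sum_pi_map_sum {A B M ι : Type*} [Fintype ι] [DecidableEq ι] [Fintype B]
    [AddCommMonoid A] [CommSemiring M] (ψ : AddChar A M) (f : ι → B → A) :
    ∑ x : ι → B, ψ (∑ i, f i (x i)) = ∏ i, ∑ y, ψ (f i y) := by
  simp only [ψ.map_sum_eq_prod, Fintype.prod_sum]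

lemma four_ne_zero_of_ringChar_ne_two {F : Type*} [Field F] (hchar : ringChar F ≠ 2) : (4 : F) ≠ 0 := by
  simpa [show (4 : F) = 2 ^ 2 by norm_num] using Ring.two_ne_zero hchar

section FiniteField

variable {F : Type} [Field F] [Fintype F]

lemma quadChar_eq_complexQuadraticChar (t : F) : quadChar t = complexQuadraticChar F t := by
  simp only [quadChar, complexQuadraticChar, MulChar.ringHomComp_apply, quadraticChar_apply,
    quadraticCharFun]
  split_ifs <;> simp

lemma gaussSumQuad_eq_gaussSum (χ : AddChar F ℂ) :
    gaussSumQuad χ = gaussSum (complexQuadraticChar F) χ := by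
  simp [gaussSumQuad, gaussSum, quadChar_eq_complexQuadraticChar]

lemma complexQuadraticChar_isQuadratic : (complexQuadraticChar F).IsQuadratic :=
  (quadraticChar_isQuadratic F).comp _

lemma complexQuadraticChar_pow_of_even {t : F} (ht : t ≠ 0) {n : ℕ} (hn : Even n) :
    complexQuadraticChar F t ^ n = 1 := by
  obtain ⟨k, rfl⟩ := hn
  rw [← two_mul, pow_mul, sq, ← map_mul, ← sq]
  simp [complexQuadraticChar, quadraticChar_sq_one' ht]

lemma sum_addChar_mul_right {χ : AddChar F ℂ} (hχ : χ ≠ 1) (b : F) :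
    ∑ x : F, χ (x * b) = if b = 0 then (Fintype.card F : ℂ) else 0 := by
  simpa using AddChar.sum_mulShift b (AddChar.IsPrimitive.of_ne_one hχ)

lemma card_mul_sum_filter_eq_zero {X : Type*} [Fintype X] {χ : AddChar F ℂ} (hχ : χ ≠ 1)
    (Q : X → F) (g : X → ℂ) :
    (Fintype.card F : ℂ) * ∑ x ∈ univ.filter (fun x => Q x = 0), g x
      = ∑ t : F, ∑ x, χ (t * Q x) * g x := by
  rw [sum_comm, mul_sum, sum_filter]
  refine sum_congr rfl fun x _ => ?_
  rw [← sum_mul, sum_addChar_mul_right hχ]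
  split_ifs <;> simp

lemma sum_erase_zero_addChar_mul_inv {χ : AddChar F ℂ} (hχ : χ ≠ 1) (c : F) :
    ∑ t ∈ univ.erase 0, χ (c * t⁻¹) = (if c = 0 then (Fintype.card F : ℂ) else 0) - 1 := by
  have hfull : ∑ t : F, χ (c * t⁻¹) = if c = 0 then (Fintype.card F : ℂ) else 0 := by
    rw [← sum_addChar_mul_right hχ c]
    exact Fintype.sum_bijective _ inv_involutive.bijective _ _ fun t => by rw [mul_comm]
  rw [← hfull, ← add_sum_erase _ _ (mem_univ 0)]
  simp

lemma sum_addChar_mul_sq (hchar : ringChar F ≠ 2) {χ : AddChar F ℂ} (hχ : χ ≠ 1) {b : F}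
    (hb : b ≠ 0) :
    ∑ y : F, χ (b * y ^ 2) = complexQuadraticChar F b * gaussSum (complexQuadraticChar F) χ := by
  set η := complexQuadraticChar F
  have hsqrts (u : F) : ((univ.filter fun y : F => y ^ 2 = u).card : ℂ) = η u + 1 := by
    have := quadraticChar_card_sqrts hchar u
    rw [Set.toFinset_ofPred] at this
    simp only [η, complexQuadraticChar, MulChar.ringHomComp_apply, eq_intCast]
    exact_mod_cast this
  calc ∑ y : F, χ (b * y ^ 2)
      = ∑ u : F, ∑ y ∈ univ.filter (fun y : F => y ^ 2 = u), χ (b * u) := by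
        rw [← sum_fiberwise univ (fun y : F => y ^ 2)]
        exact sum_congr rfl fun u _ => sum_congr rfl fun y hy => by rw [(mem_filter.mp hy).2]
    _ = gaussSum η (χ.mulShift b) + ∑ u : F, χ (u * b) := by
        simp only [sum_const, nsmul_eq_mul, hsqrts, add_mul, one_mul, sum_add_distrib, gaussSum,
          AddChar.mulShift_apply, mul_comm _ b]
    _ = η b * gaussSum η χ := by
        rw [sum_addChar_mul_right hχ, if_neg hb, add_zero,
          ← Units.val_mk0 hb, gaussSum_mulShift_eq,
          complexQuadraticChar_isQuadratic.inv]

lemma sum_addChar_quadratic (hchar : ringChar F ≠ 2) {χ : AddChar F ℂ} (hχ : χ ≠ 1) {b : F}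
    (hb : b ≠ 0) (c : F) :
    ∑ y : F, χ (b * y ^ 2 + y * c)
      = complexQuadraticChar F b * gaussSum (complexQuadraticChar F) χ * χ (-c ^ 2 / (4 * b)) := by
  have h2 : (2 : F) ≠ 0 := Ring.two_ne_zero hchar
  have h4 := four_ne_zero_of_ringChar_ne_two hchar
  have hsquare (z : F) :
      b * (z - c / (2 * b)) ^ 2 + (z - c / (2 * b)) * c = b * z ^ 2 + -c ^ 2 / (4 * b) := by
    field_simp
    ring
  rw [← (Equiv.subRight (c / (2 * b))).sum_comp]
  simp only [Equiv.subRight_apply, hsquare, AddChar.map_add_eq_mul, ← sum_mul,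
    sum_addChar_mul_sq hchar hχ hb]

variable {ι : Type*} [Fintype ι] [DecidableEq ι]

lemma sum_addChar_dotProduct {χ : AddChar F ℂ} (hχ : χ ≠ 1) (m : ι → F) :
    ∑ x : ι → F, χ (∑ j, x j * m j)
      = if m = 0 then (Fintype.card F : ℂ) ^ Fintype.card ι else 0 := by
  rw [χ.sum_pi_map_sum fun j y => y * m j]
  simp only [sum_addChar_mul_right hχ]
  split_ifs with hm
  · simp [hm]
  · obtain ⟨j, hj⟩ := Function.ne_iff.mp hm
    exact prod_eq_zero (mem_univ j) (if_neg hj)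

lemma sum_addChar_diagonalQuadratic (hchar : ringChar F ≠ 2) {χ : AddChar F ℂ} (hχ : χ ≠ 1)
    {a : ι → F} (ha : ∀ j, a j ≠ 0) (hι : Even (Fintype.card ι)) {t : F} (ht : t ≠ 0)
    (m : ι → F) :
    ∑ x : ι → F, χ (t * ∑ j, a j * x j ^ 2 + ∑ j, x j * m j)
      = gaussSum (complexQuadraticChar F) χ ^ Fintype.card ι
        * complexQuadraticChar F (∏ j, a j) * χ (-(∑ j, m j ^ 2 / a j) / 4 * t⁻¹) := by
  have h4 := four_ne_zero_of_ringChar_ne_two hchar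
  have hsplit (x : ι → F) : t * ∑ j, a j * x j ^ 2 + ∑ j, x j * m j
      = ∑ j, (t * a j * x j ^ 2 + x j * m j) := by
    simp only [mul_sum, sum_add_distrib, mul_assoc]
  have hexp : ∑ j, -m j ^ 2 / (4 * (t * a j)) = -(∑ j, m j ^ 2 / a j) / 4 * t⁻¹ := by
    rw [neg_div, neg_mul, sum_div, sum_mul, ← sum_neg_distrib]
    refine sum_congr rfl fun j _ => ?_
    have := ha j
    field_simp
  simp only [hsplit, χ.sum_pi_map_sum fun j y => t * a j * y ^ 2 + y * m j,
    sum_addChar_quadratic hchar hχ (mul_ne_zero ht (ha _)), prod_mul_distrib, map_mul, prod_const,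
    card_univ, complexQuadraticChar_pow_of_even ht hι, one_mul, ← map_prod, ← χ.map_sum_eq_prod,
    hexp]
  ring

lemma card_mul_sum_diagonalQuadric (hchar : ringChar F ≠ 2) {χ : AddChar F ℂ} (hχ : χ ≠ 1)
    {a : ι → F} (ha : ∀ j, a j ≠ 0) (hι : Even (Fintype.card ι)) (m : ι → F) :
    (Fintype.card F : ℂ) * ∑ x ∈ univ.filter (fun x : ι → F => ∑ j, a j * x j ^ 2 = 0),
        χ (∑ j, x j * m j)
      = (if m = 0 then (Fintype.card F : ℂ) ^ Fintype.card ι else 0)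
        + gaussSum (complexQuadraticChar F) χ ^ Fintype.card ι
          * complexQuadraticChar F (∏ j, a j)
          * ((if ∑ j, m j ^ 2 / a j = 0 then (Fintype.card F : ℂ) else 0) - 1) := by
  have h4 := four_ne_zero_of_ringChar_ne_two hchar
  rw [card_mul_sum_filter_eq_zero hχ, ← add_sum_erase _ _ (mem_univ 0)]
  simp only [← AddChar.map_add_eq_mul]
  congr 1
  · simpa using sum_addChar_dotProduct hχ m
  · rw [sum_congr rfl fun t ht => sum_addChar_diagonalQuadratic hchar hχ ha hι
      (ne_of_mem_erase ht) m, ← mul_sum, sum_erase_zero_addChar_mul_inv hχ]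
    simp [h4]

end FiniteField

/-- explicit formula for `(dσ)^∨` in even dimensions `d ≥ 2`. -/
theorem statement4 (d : ℕ) (hd : 2 ≤ d) (heven : Even d)
    (F : Type) [Field F] [Fintype F] (hchar : ringChar F ≠ 2)
    (χ : AddChar F ℂ) (hχ : χ ≠ 1)
    (a : Fin d → F) (ha : ∀ j, a j ≠ 0) :
    let S : Finset (Fin d → F) := Finset.univ.filter fun x => ∑ j, a j * x j ^ 2 = 0
    let σv : (Fin d → F) → ℂ := fun m => (S.card : ℂ)⁻¹ * ∑ x ∈ S, χ (∑ j, x j * m j)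
    let G : ℂ := gaussSumQuad χ
    let q : ℂ := (Fintype.card F : ℂ)
    (σv 0 = q ^ (d - 1) / (S.card : ℂ) +
      G ^ d / (S.card : ℂ) * (1 - q⁻¹) * quadChar (∏ j, a j)) ∧
    (∀ m : Fin d → F, m ≠ 0 → ∑ j, m j ^ 2 / a j = 0 →
      σv m = G ^ d / (S.card : ℂ) * (1 - q⁻¹) * quadChar (∏ j, a j)) ∧
    (∀ m : Fin d → F, ∑ j, m j ^ 2 / a j ≠ 0 →
      σv m = -(G ^ d / (q * (S.card : ℂ))) * quadChar (∏ j, a j)) := by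
  intro S σv G q
  have hq : q ≠ 0 := by simp [q]
  have hS : (S.card : ℂ) ≠ 0 := Nat.cast_ne_zero.mpr (card_ne_zero_of_mem (a := 0) (by simp [S]))
  have hσv (m : Fin d → F) : σv m = ((if m = 0 then q ^ d else 0)
      + G ^ d * quadChar (∏ j, a j) * ((if ∑ j, m j ^ 2 / a j = 0 then q else 0) - 1))
        / (q * S.card) := by
    have key : q * ∑ x ∈ S, χ (∑ j, x j * m j) = (if m = 0 then q ^ d else 0)
        + G ^ d * quadChar (∏ j, a j) * ((if ∑ j, m j ^ 2 / a j = 0 then q else 0) - 1) := by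
      simpa [G, gaussSumQuad_eq_gaussSum, quadChar_eq_complexQuadraticChar] using
        card_mul_sum_diagonalQuadric hchar hχ ha (by simpa using heven) m
    rw [eq_div_iff (mul_ne_zero hq hS), ← key]
    simp only [σv]
    field_simp
  have hqd : q ^ d = q ^ (d - 1) * q := by rw [← pow_succ, Nat.sub_add_cancel (by omega)]
  refine ⟨?_, fun m hm hc => ?_, fun m hc => ?_⟩
  · rw [hσv, if_pos rfl, if_pos (by simp), hqd]
    field_simp
  · rw [hσv, if_neg hm, if_pos hc]
    field_simp
    ring
  · rw [hσv, if_neg (by rintro rfl; simp at hc), if_neg hc]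
    field_simp
    ring
end

section
/- Let d ≥ 2 be even, a_1,…,a_d ∈ F_q nonzero, S = {x ∈ F_q^d : ∑ a_j x_j² = 0}, and (dσ)^∨(m) = |S|^{−1} ∑_{x∈S} χ(x·m). Then (dσ)^∨(0,…,0) = 1, and there is a constant C independent of q such that |(dσ)^∨(m)| ≤ C q^{−(d−2)/2} for all m ≠ (0,…,0). -/
open Finset BigOperators
open scoped Classical

lemma norm_sum_addChar_quadratic {F : Type*} [Field F] [Fintype F] {ψ : AddChar F ℂ}
    (hF : ringChar F ≠ 2) (hψ : ψ ≠ 1) {b : F} (hb : b ≠ 0) (c : F) :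
    ‖∑ y, ψ (b * y ^ 2 + c * y)‖ = √(Fintype.card F) := by
  rw [← Real.sqrt_sq (norm_nonneg _)]
  congr 1
  set f : F → F := fun y => b * y ^ 2 + c * y
  have hshift : ∀ u z, f (u + z) - f z = f u + z * (2 * b * u) := fun u z => by simp only [f]; ring
  have h2bu : ∀ u, 2 * b * u = 0 ↔ u = 0 := fun u => by simp [Ring.two_ne_zero hF, hb]
  have key : (∑ y, ψ (f y)) * starRingEnd ℂ (∑ y, ψ (f y)) = Fintype.card F :=
    calc (∑ y, ψ (f y)) * starRingEnd ℂ (∑ y, ψ (f y))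
        = ∑ z, ∑ y, ψ (f y - f z) := by
          simp only [map_sum, ← AddChar.map_neg_eq_conj, sum_mul_sum, sub_eq_add_neg,
            AddChar.map_add_eq_mul]
          exact sum_comm
      _ = ∑ z, ∑ u, ψ (f u) * ψ (z * (2 * b * u)) := by
          refine sum_congr rfl fun z _ => ?_
          rw [← Equiv.sum_comp (Equiv.addRight z)]
          simp only [Equiv.coe_addRight, hshift, AddChar.map_add_eq_mul]
      _ = ∑ u, ψ (f u) * ∑ z, ψ (z * (2 * b * u)) := by
          rw [sum_comm]; simp only [mul_sum]
      _ = Fintype.card F := by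
          simp [AddChar.sum_mulShift _ (AddChar.IsPrimitive.of_ne_one hψ), h2bu, f]
  rw [Complex.mul_conj, Complex.normSq_eq_norm_sq] at key
  exact_mod_cast key

section
variable {R ι : Type*} [CommRing R] [Fintype R] [Fintype ι] [DecidableEq ι]

noncomputable def quadric (a : ι → R) : Finset (ι → R) :=
  univ.filter fun x => ∑ j, a j * x j ^ 2 = 0

lemma card_mul_sum_quadric_eq {ψ : AddChar R ℂ} (hψ : ψ.IsPrimitive) (a m : ι → R) :
    (Fintype.card R : ℂ) * ∑ x ∈ quadric a, ψ (∑ j, x j * m j)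
      = ∑ t, ∏ j, ∑ y, ψ (t * a j * y ^ 2 + m j * y) := by
  calc _ = ∑ x : ι → R, (∑ t, ψ (t * ∑ j, a j * x j ^ 2)) * ψ (∑ j, x j * m j) := by
          rw [quadric, sum_filter, mul_sum]
          refine sum_congr rfl fun x _ => ?_
          rw [AddChar.sum_mulShift _ hψ]
          split_ifs <;> simp
    _ = ∑ t, ∑ x : ι → R, ∏ j, ψ (t * a j * x j ^ 2 + m j * x j) := by
          simp only [sum_mul, ← AddChar.map_add_eq_mul]
          rw [sum_comm]
          refine sum_congr rfl fun t _ => sum_congr rfl fun x _ => ?_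
          rw [← AddChar.map_sum_eq_prod, mul_sum, ← sum_add_distrib]
          congr 1
          refine sum_congr rfl fun j _ => by ring
    _ = _ := by simp only [Fintype.prod_sum]

end

section
variable {F ι : Type*} [Field F] [Fintype F] [Fintype ι] [DecidableEq ι] {ψ : AddChar F ℂ}

lemma norm_card_mul_sum_quadric_sub_le (hF : ringChar F ≠ 2) (hψ : ψ ≠ 1) {a : ι → F}
    (ha : ∀ j, a j ≠ 0) (m : ι → F) :
    ‖(Fintype.card F : ℂ) * ∑ x ∈ quadric a, ψ (∑ j, x j * m j)
        - if m = 0 then (Fintype.card F : ℂ) ^ Fintype.card ι else 0‖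
      ≤ Fintype.card F * √(Fintype.card F) ^ Fintype.card ι := by
  have hprim := AddChar.IsPrimitive.of_ne_one hψ
  have hzero : ∏ j, ∑ y, ψ (0 * a j * y ^ 2 + m j * y)
      = if m = 0 then (Fintype.card F : ℂ) ^ Fintype.card ι else 0 := by
    simp only [zero_mul, zero_add, mul_comm (m _), AddChar.sum_mulShift _ hprim, Nat.cast_ite,
      Nat.cast_zero, Fintype.prod_ite_zero, prod_const, card_univ, funext_iff, Pi.zero_apply]
  have hnorm : ∀ t ≠ 0, ‖∏ j, ∑ y, ψ (t * a j * y ^ 2 + m j * y)‖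
      = √(Fintype.card F) ^ Fintype.card ι := fun t ht => by
    simp only [norm_prod, norm_sum_addChar_quadratic hF hψ (mul_ne_zero ht (ha _)), prod_const,
      card_univ]
  rw [card_mul_sum_quadric_eq hprim, ← add_sum_erase univ _ (mem_univ 0), hzero,
    add_sub_cancel_left]
  calc _ ≤ ∑ t ∈ univ.erase 0, √(Fintype.card F) ^ Fintype.card ι :=
        norm_sum_le_of_le _ fun t ht => (hnorm t (ne_of_mem_erase ht)).le
    _ ≤ _ := by
        rw [sum_const, nsmul_eq_mul]
        gcongr
        exact_mod_cast card_le_univ _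

lemma card_pow_sub_le_card_mul_card_quadric (hF : ringChar F ≠ 2) (hψ : ψ ≠ 1) {a : ι → F}
    (ha : ∀ j, a j ≠ 0) :
    (Fintype.card F : ℝ) ^ Fintype.card ι - Fintype.card F * √(Fintype.card F) ^ Fintype.card ι
      ≤ Fintype.card F * #(quadric a) := by
  have h := norm_card_mul_sum_quadric_sub_le hF hψ ha 0
  simp only [Pi.zero_apply, mul_zero, sum_const_zero, AddChar.map_zero_eq_one, sum_const,
    nsmul_eq_mul, mul_one, if_true] at h
  rw [← neg_sub, norm_neg, ← Complex.ofReal_natCast, ← Complex.ofReal_natCast (#_),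
    ← Complex.ofReal_pow, ← Complex.ofReal_mul, ← Complex.ofReal_sub, Complex.norm_real,
    Real.norm_eq_abs] at h
  linarith [(abs_le.mp h).2]

lemma norm_sum_quadric_le (hF : ringChar F ≠ 2) (hψ : ψ ≠ 1) {a : ι → F}
    (ha : ∀ j, a j ≠ 0) {m : ι → F} (hm : m ≠ 0) :
    ‖∑ x ∈ quadric a, ψ (∑ j, x j * m j)‖ ≤ √(Fintype.card F) ^ Fintype.card ι := by
  have h := norm_card_mul_sum_quadric_sub_le hF hψ ha m
  rw [if_neg hm, sub_zero, norm_mul, Complex.norm_natCast] at h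
  exact le_of_mul_le_mul_left h (by exact_mod_cast Fintype.card_pos)

end

lemma Real.sqrt_pow_eq_mul_rpow {q : ℝ} (hq : 0 < q) (d : ℕ) :
    √q ^ d = q * q ^ (((d : ℝ) - 2) / 2) := by
  rw [Real.sqrt_eq_rpow, ← Real.rpow_natCast, ← Real.rpow_mul hq.le,
    show 1 / 2 * (d : ℝ) = 1 + ((d : ℝ) - 2) / 2 by ring, Real.rpow_add hq, Real.rpow_one]

lemma inv_mul_le_two_mul_inv {q r N x : ℝ} (hq : 0 < q) (hr : 0 < r) (hN : 0 < N)
    (hxN : x ≤ N) (hx : x ≤ q * r) (hqN : (q * r) ^ 2 - q * (q * r) ≤ q * N) :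
    N⁻¹ * x ≤ 2 * r⁻¹ := by
  rcases le_or_gt r 2 with hr2 | hr2
  · calc N⁻¹ * x ≤ 1 := by rwa [inv_mul_le_one₀ hN]
      _ ≤ 2 * r⁻¹ := by rw [← div_eq_mul_inv, one_le_div hr]; exact hr2
  · have hN' : q * r * (r - 1) ≤ N := le_of_mul_le_mul_left (by nlinarith) hq
    rw [inv_mul_le_iff₀ hN, ← div_eq_mul_inv, mul_div_assoc', le_div_iff₀ hr]
    nlinarith

theorem statement6_general (d : ℕ) :
    ∃ C : ℝ, 0 < C ∧
      ∀ (F : Type) [Field F] [Fintype F], ringChar F ≠ 2 →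
        ∀ (χ : AddChar F ℂ), χ ≠ 1 →
          ∀ a : Fin d → F, (∀ j, a j ≠ 0) →
            (let S : Finset (Fin d → F) :=
              Finset.univ.filter fun x => ∑ j, a j * x j ^ 2 = 0
            let σv : (Fin d → F) → ℂ :=
              fun m => (S.card : ℂ)⁻¹ * ∑ x ∈ S, χ (∑ j, x j * m j)
            σv 0 = 1 ∧
            ∀ m : Fin d → F, m ≠ 0 →
              ‖σv m‖ ≤ C * (Fintype.card F : ℝ) ^ (-(((d : ℝ) - 2) / 2))) := by
  refine ⟨2, two_pos, fun F _ _ hF χ hχ a ha => ?_⟩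
  change (#(quadric a) : ℂ)⁻¹ * ∑ x ∈ quadric a, χ (∑ j, x j * (0 : Fin d → F) j) = 1 ∧
    ∀ m : Fin d → F, m ≠ 0 → ‖(#(quadric a) : ℂ)⁻¹ * ∑ x ∈ quadric a, χ (∑ j, x j * m j)‖ ≤ _
  have hS : 0 < #(quadric a) := card_pos.mpr ⟨0, by simp [quadric]⟩
  have hq : (0 : ℝ) < Fintype.card F := by exact_mod_cast Fintype.card_pos
  refine ⟨by simp [hS.ne'], fun m hm => ?_⟩
  rw [norm_mul, norm_inv, Complex.norm_natCast, Real.rpow_neg hq.le]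
  have hsqrt := Real.sqrt_pow_eq_mul_rpow hq d
  refine inv_mul_le_two_mul_inv hq (by positivity) (by exact_mod_cast hS) ?_ ?_ ?_
  · exact (norm_sum_le _ _).trans (by simp)
  · simpa [hsqrt] using norm_sum_quadric_le hF hχ ha hm
  · have h := card_pow_sub_le_card_mul_card_quadric hF hχ ha
    rw [← hsqrt, ← pow_mul, mul_comm d 2, pow_mul, Real.sq_sqrt hq.le]
    simpa using h

/-- Fourier decay of the surface measure in even dimensions `d ≥ 2`:
`(dσ)^∨(0) = 1` and `|(dσ)^∨(m)| ≤ C q^{−(d−2)/2}` for `m ≠ 0`, with `C`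
independent of `q`. -/
theorem statement6 (d : ℕ) (hd : 2 ≤ d) (heven : Even d) :
    ∃ C : ℝ, 0 < C ∧
      ∀ (F : Type) [Field F] [Fintype F], ringChar F ≠ 2 →
        ∀ (χ : AddChar F ℂ), χ ≠ 1 →
          ∀ a : Fin d → F, (∀ j, a j ≠ 0) →
            (let S : Finset (Fin d → F) :=
              Finset.univ.filter fun x => ∑ j, a j * x j ^ 2 = 0
            let σv : (Fin d → F) → ℂ :=
              fun m => (S.card : ℂ)⁻¹ * ∑ x ∈ S, χ (∑ j, x j * m j)
            σv 0 = 1 ∧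
            ∀ m : Fin d → F, m ≠ 0 →
              ‖σv m‖ ≤ C * (Fintype.card F : ℝ) ^ (-(((d : ℝ) - 2) / 2))) :=
  statement6_general d
end

section
/- Let d ≥ 2, S ⊂ F_q^d an algebraic variety with normalized surface measure dσ, and suppose R*(p → r) ≲ 1, i.e. the extension estimate ‖(f dσ)^∨‖_{L^r(dm)} ≤ C‖f‖_{L^p(S,dσ)} holds with C independent of q, where |S| ∼ q^{d−1}. If S contains a k-dimensional affine subspace H of F_q^d (so |H| = q^k) with k ≤ d−2, then r ≥ p(d−k)/((p−1)(d−1−k)). -/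
/-! Test the extension estimate on the indicator of the affine subspace `H = W + v ⊆ S`.
The phase `x ⬝ᵥ m` is constant on `H` for every `m` in the annihilator of `W`, which has at
least `q ^ (d - k)` elements, so `|(f dσ)^∨(m)| = |H| / |S|` there. The estimate then gives
`q ^ ((d - k) / r) ≤ C (|S| / |H|) ^ (1 - 1/p) ≲ q ^ ((d - 1 - k) (1 - 1/p))`, and letting `q → ∞`
along the primes yields `(d - k) / r ≤ (d - 1 - k) (1 - 1/p)`. -/

open Finset BigOperators
open scoped Classical

open Filter Module

section FiniteField

variable {F ι : Type*} [Field F] [Fintype ι]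

-- The paper's `R*(p → r) ≤ C`. `DecidableEq ι` is an argument so that, for `ι = Fin d`, the
-- `Fintype (ι → F)` instance is the statement's rather than a classical one.
def ExtensionEstimate [Fintype F] [DecidableEq ι] (χ : AddChar F ℂ) (S : Finset (ι → F))
    (p r C : ℝ) : Prop :=
  ∀ f : (ι → F) → ℂ,
    (∑ m : ι → F, ‖(S.card : ℂ)⁻¹ * ∑ x ∈ S, f x * χ (x ⬝ᵥ m)‖ ^ r) ^ ((1 : ℝ) / r) ≤
      C * ((S.card : ℝ)⁻¹ * ∑ x ∈ S, ‖f x‖ ^ p) ^ ((1 : ℝ) / p)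

lemma card_le_finrank_add_finrank_orthogonal_dotProduct (W : Submodule F (ι → F)) :
    Fintype.card ι ≤ finrank F W + finrank F (W.orthogonalBilin (dotProductBilin F F)) := by
  have := LinearMap.BilinForm.finrank_add_finrank_orthogonal'
    (B := (dotProductBilin F F : LinearMap.BilinForm F (ι → F))) W
  rw [finrank_fintype_fun_eq_card] at this
  exact (Nat.le_add_right _ _).trans_eq this.symm

lemma dotProduct_eq_of_sub_mem {W : Submodule F (ι → F)} {v m x : ι → F}
    (hm : m ∈ W.orthogonalBilin (dotProductBilin F F)) (hx : x - v ∈ W) : x ⬝ᵥ m = v ⬝ᵥ m := by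
  have : (x - v) ⬝ᵥ m = 0 := hm (x - v) hx
  rwa [sub_dotProduct, sub_eq_zero] at this

variable [Fintype F] [DecidableEq ι]

noncomputable def affineIndicator (W : Submodule F (ι → F)) (v : ι → F) (x : ι → F) : ℂ :=
  if x - v ∈ W then 1 else 0

variable {S : Finset (ι → F)} {W : Submodule F (ι → F)} {v : ι → F}

lemma card_filter_sub_mem (hsub : ∀ w ∈ W, w + v ∈ S) :
    #(S.filter (· - v ∈ W)) = Fintype.card W := by
  have : S.filter (· - v ∈ W) = univ.filter (· - v ∈ W) := by
    ext x
    simpa using fun hx => sub_add_cancel x v ▸ hsub _ hx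
  rw [this, ← Fintype.card_subtype]
  exact Fintype.card_congr (Equiv.subtypeEquiv (Equiv.subRight v) fun _ => Iff.rfl)

lemma norm_extension_affineIndicator (χ : AddChar F ℂ) (hsub : ∀ w ∈ W, w + v ∈ S) {m : ι → F}
    (hm : m ∈ W.orthogonalBilin (dotProductBilin F F)) :
    ‖(S.card : ℂ)⁻¹ * ∑ x ∈ S, affineIndicator W v x * χ (x ⬝ᵥ m)‖ =
      Fintype.card W / S.card := by
  have hsum : ∑ x ∈ S, affineIndicator W v x * χ (x ⬝ᵥ m) = Fintype.card W * χ (v ⬝ᵥ m) := by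
    simp only [affineIndicator, ite_mul, one_mul, zero_mul]
    rw [← sum_filter,
      sum_congr rfl fun x hx => by rw [dotProduct_eq_of_sub_mem hm (mem_filter.1 hx).2],
      sum_const, card_filter_sub_mem hsub, nsmul_eq_mul]
  rw [hsum, norm_mul, norm_mul, AddChar.norm_apply, norm_inv, Complex.norm_natCast,
    Complex.norm_natCast, mul_one, inv_mul_eq_div]

lemma sum_norm_rpow_affineIndicator {p : ℝ} (hp : p ≠ 0) (hsub : ∀ w ∈ W, w + v ∈ S) :
    ∑ x ∈ S, ‖affineIndicator W v x‖ ^ p = Fintype.card W := by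
  have : ∀ x, ‖affineIndicator W v x‖ ^ p = if x - v ∈ W then 1 else 0 := fun x => by
    unfold affineIndicator; split_ifs <;> simp [hp]
  simp only [this, sum_boole, card_filter_sub_mem hsub]

lemma card_orthogonal_rpow_mul_le {χ : AddChar F ℂ} {p r C : ℝ}
    (hext : ExtensionEstimate χ S p r C) (hp : 0 < p) (hr : 0 < r) (hsub : ∀ w ∈ W, w + v ∈ S) :
    (Fintype.card (W.orthogonalBilin (dotProductBilin F F)) : ℝ) ^ (1 / r) *
        (Fintype.card W / S.card) ≤ C * (Fintype.card W / S.card) ^ (1 / p) := by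
  set A : ℝ := Fintype.card W / S.card
  set f := affineIndicator W v
  have hA : 0 ≤ A := by positivity
  have hsum : (Fintype.card (W.orthogonalBilin (dotProductBilin F F)) : ℝ) * A ^ r ≤
      ∑ m, ‖(S.card : ℂ)⁻¹ * ∑ x ∈ S, f x * χ (x ⬝ᵥ m)‖ ^ r := by
    rw [Fintype.card_subtype, ← nsmul_eq_mul, ← sum_const, sum_filter]
    refine sum_le_sum fun m _ => ?_
    split_ifs with hm
    · rw [norm_extension_affineIndicator χ hsub hm]
    · positivity
  calc (Fintype.card (W.orthogonalBilin (dotProductBilin F F)) : ℝ) ^ (1 / r) * A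
      = ((Fintype.card (W.orthogonalBilin (dotProductBilin F F)) : ℝ) * A ^ r) ^ (1 / r) := by
        rw [Real.mul_rpow (by positivity) (by positivity), one_div, Real.rpow_rpow_inv hA hr.ne']
    _ ≤ (∑ m, ‖(S.card : ℂ)⁻¹ * ∑ x ∈ S, f x * χ (x ⬝ᵥ m)‖ ^ r) ^ (1 / r) := by gcongr
    _ ≤ C * ((S.card : ℝ)⁻¹ * ∑ x ∈ S, ‖f x‖ ^ p) ^ (1 / p) := hext f
    _ = C * A ^ (1 / p) := by rw [sum_norm_rpow_affineIndicator hp.ne' hsub, inv_mul_eq_div]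

lemma rpow_le_of_extensionEstimate {χ : AddChar F ℂ} {p r C : ℝ}
    (hext : ExtensionEstimate χ S p r C) (hp : 0 < p) (hr : 0 < r) (hsub : ∀ w ∈ W, w + v ∈ S) :
    (Fintype.card F : ℝ) ^ (((Fintype.card ι : ℝ) - finrank F W) / r) ≤
      C * (S.card / (Fintype.card F : ℝ) ^ finrank F W) ^ (1 - 1 / p) := by
  set q : ℝ := (Fintype.card F : ℝ)
  set A : ℝ := Fintype.card W / S.card
  have hS : 0 < S.card := card_pos.2 ⟨v, by simpa using hsub 0 W.zero_mem⟩
  have hA : 0 < A := by positivity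
  have hq : 1 ≤ q := Nat.one_le_cast.2 Fintype.card_pos
  have horth : q ^ (((Fintype.card ι : ℝ) - finrank F W) / r) ≤
      (Fintype.card (W.orthogonalBilin (dotProductBilin F F)) : ℝ) ^ (1 / r) := by
    rw [card_eq_pow_finrank (K := F) (V := W.orthogonalBilin (dotProductBilin F F)), Nat.cast_pow,
      ← Real.rpow_natCast, ← Real.rpow_mul (by positivity), ← mul_one_div]
    gcongr
    rw [sub_le_iff_le_add']
    exact_mod_cast card_le_finrank_add_finrank_orthogonal_dotProduct W
  have hinv : S.card / q ^ finrank F W = A⁻¹ := by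
    rw [inv_div, card_eq_pow_finrank (K := F) (V := W), Nat.cast_pow]
  calc q ^ (((Fintype.card ι : ℝ) - finrank F W) / r)
      ≤ C * A ^ (1 / p) / A :=
        (le_div_iff₀ hA).2 <| (mul_le_mul_of_nonneg_right horth hA.le).trans
          (card_orthogonal_rpow_mul_le hext hp hr hsub)
    _ = C * (S.card / q ^ finrank F W) ^ (1 - 1 / p) := by
        rw [hinv, Real.inv_rpow hA.le, Real.rpow_sub hA, Real.rpow_one, inv_div, mul_div_assoc]

lemma rpow_le_mul_rpow_of_extensionEstimate {χ : AddChar F ℂ} {p r C c : ℝ}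
    (hext : ExtensionEstimate χ S p r C) (hp : 1 ≤ p) (hr : 0 < r) (hC : 0 ≤ C) (hc : 0 ≤ c)
    (hsub : ∀ w ∈ W, w + v ∈ S)
    (hS : (S.card : ℝ) ≤ c * (Fintype.card F : ℝ) ^ ((Fintype.card ι : ℝ) - 1)) :
    (Fintype.card F : ℝ) ^ (((Fintype.card ι : ℝ) - finrank F W) / r) ≤
      C * c ^ (1 - 1 / p) *
        (Fintype.card F : ℝ) ^ (((Fintype.card ι : ℝ) - 1 - finrank F W) * (1 - 1 / p)) := by
  set q : ℝ := (Fintype.card F : ℝ)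
  have hq : 0 < q := Nat.cast_pos.2 Fintype.card_pos
  have hu : 0 ≤ 1 - 1 / p := sub_nonneg.2 ((div_le_one (by linarith)).2 hp)
  have hratio : S.card / q ^ finrank F W ≤ c * q ^ ((Fintype.card ι : ℝ) - 1 - finrank F W) := by
    rw [Real.rpow_sub hq, Real.rpow_natCast, ← mul_div_assoc]
    gcongr
  calc q ^ (((Fintype.card ι : ℝ) - finrank F W) / r)
      ≤ C * (S.card / q ^ finrank F W) ^ (1 - 1 / p) :=
        rpow_le_of_extensionEstimate hext (by linarith) hr hsub
    _ ≤ C * (c * q ^ ((Fintype.card ι : ℝ) - 1 - finrank F W)) ^ (1 - 1 / p) := by gcongr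
    _ = _ := by rw [Real.mul_rpow hc (by positivity), ← Real.rpow_mul hq.le, mul_assoc]

end FiniteField

lemma le_of_frequently_rpow_le_mul_rpow {a b K : ℝ}
    (h : ∃ᶠ n : ℕ in atTop, (n : ℝ) ^ a ≤ K * (n : ℝ) ^ b) : a ≤ b := by
  by_contra! hba
  have hlarge : ∀ᶠ n : ℕ in atTop, K < (n : ℝ) ^ (a - b) ∧ 0 < (n : ℝ) :=
    ((tendsto_rpow_atTop (sub_pos.2 hba)).comp tendsto_natCast_atTop_atTop).eventually_gt_atTop K
      |>.and (tendsto_natCast_atTop_atTop.eventually_gt_atTop 0)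
  obtain ⟨n, hn, hKn, hn0⟩ := (h.and_eventually hlarge).exists
  have : K * (n : ℝ) ^ b < (n : ℝ) ^ a := by
    rw [← sub_add_cancel a b, Real.rpow_add hn0]
    exact mul_lt_mul_of_pos_right hKn (by positivity)
  exact hn.not_gt this

theorem statement11_general (d k : ℕ) (hd : 2 ≤ d) (hk : k ≤ d - 2)
    (p r c₁ c₂ C : ℝ) (hp : 1 < p) (hr : 1 ≤ r)
    (hc₂ : 0 < c₂) (hC : 0 < C)
    (H : ∀ (F : Type) [Field F] [Fintype F],
      ∃ (χ : AddChar F ℂ) (S : Finset (Fin d → F))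
        (W : Submodule F (Fin d → F)) (v : Fin d → F),
        χ ≠ 1 ∧
        Module.finrank F W = k ∧
        (∀ w ∈ W, w + v ∈ S) ∧
        c₁ * (Fintype.card F : ℝ) ^ (d - 1) ≤ (S.card : ℝ) ∧
        (S.card : ℝ) ≤ c₂ * (Fintype.card F : ℝ) ^ (d - 1) ∧
        ∀ f : (Fin d → F) → ℂ,
          (∑ m : Fin d → F,
              ‖(S.card : ℂ)⁻¹ * ∑ x ∈ S, f x * χ (∑ j, x j * m j)‖ ^ r) ^ ((1 : ℝ) / r) ≤
            C * ((S.card : ℝ)⁻¹ * ∑ x ∈ S, ‖f x‖ ^ p) ^ ((1 : ℝ) / p)) :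
    r ≥ p * ((d : ℝ) - k) / ((p - 1) * ((d : ℝ) - 1 - k)) := by
  set t : ℝ := (d : ℝ) - 1 - k
  set u : ℝ := 1 - 1 / p
  have ht : 0 < t := by
    have : (k : ℝ) + 2 ≤ d := by exact_mod_cast (by omega : k + 2 ≤ d)
    linarith
  have hprime : ∀ P : ℕ, P.Prime →
      (P : ℝ) ^ (((d : ℝ) - k) / r) ≤ C * c₂ ^ u * (P : ℝ) ^ (t * u) := by
    intro P hP
    have : Fact P.Prime := ⟨hP⟩
    obtain ⟨χ, S, W, v, -, hW, hsub, -, hS, hext⟩ := H (ZMod P)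
    rw [ZMod.card, ← Real.rpow_natCast, Nat.cast_sub (by omega), Nat.cast_one] at hS
    simpa only [Fintype.card_fin, hW, ZMod.card] using
      rpow_le_mul_rpow_of_extensionEstimate (hext : ExtensionEstimate χ S p r C) hp.le
        (by linarith) hC.le hc₂.le hsub (by simpa only [Fintype.card_fin, ZMod.card] using hS)
  have hexp : ((d : ℝ) - k) / r ≤ t * u := le_of_frequently_rpow_le_mul_rpow
    ((Nat.frequently_atTop_iff_infinite.2 Nat.infinite_setOfPred_prime).mono hprime)
  rw [div_le_iff₀ (by linarith)] at hexp
  rw [ge_iff_le, div_le_iff₀ (mul_pos (by linarith) ht)]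
  calc p * ((d : ℝ) - k) ≤ p * (t * u * r) := by gcongr
    _ = r * ((p - 1) * t) := by
      simp only [u]
      field_simp

/-- necessary condition for extension estimates from a variety containing
a `k`-dimensional affine subspace. If for every finite field `F_q` there are data
(`χ` nontrivial, `S` with `|S| ∼ q^{d−1}` containing the affine subspace `W + v` with
`dim W = k ≤ d−2`) for which the extension estimate `R*(p → r) ≤ C` holds with
constants independent of `q`, then `r ≥ p(d−k)/((p−1)(d−1−k))`. -/
theorem statement11 (d k : ℕ) (hd : 2 ≤ d) (hk : k ≤ d - 2)
    (p r c₁ c₂ C : ℝ) (hp : 1 < p) (hr : 1 ≤ r)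
    (hc₁ : 0 < c₁) (hc₂ : 0 < c₂) (hC : 0 < C)
    (H : ∀ (F : Type) [Field F] [Fintype F],
      ∃ (χ : AddChar F ℂ) (S : Finset (Fin d → F))
        (W : Submodule F (Fin d → F)) (v : Fin d → F),
        χ ≠ 1 ∧
        Module.finrank F W = k ∧
        (∀ w ∈ W, w + v ∈ S) ∧
        c₁ * (Fintype.card F : ℝ) ^ (d - 1) ≤ (S.card : ℝ) ∧
        (S.card : ℝ) ≤ c₂ * (Fintype.card F : ℝ) ^ (d - 1) ∧
        ∀ f : (Fin d → F) → ℂ,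
          (∑ m : Fin d → F,
              ‖(S.card : ℂ)⁻¹ * ∑ x ∈ S, f x * χ (∑ j, x j * m j)‖ ^ r) ^ ((1 : ℝ) / r) ≤
            C * ((S.card : ℝ)⁻¹ * ∑ x ∈ S, ‖f x‖ ^ p) ^ ((1 : ℝ) / p)) :
    r ≥ p * ((d : ℝ) - k) / ((p - 1) * ((d : ℝ) - 1 - k)) :=
  statement11_general d k hd hk p r c₁ c₂ C hp hr hc₂ hC H
end

section
/- Let S ⊂ F_q^d, |S| ≥ c q^{d−1}, with normalized surface measure dσ, and suppose |(dσ)^∨(m)| ≤ C q^{−α/2} for some α > 0 and all m ≠ 0, C independent of q. Then there is C' independent of q such that for every f : F_q^d → ℂ, ‖f ∗ dσ‖_{L^{α+2}(F_q^d,dx)} ≤ C' ‖f‖_{L^{(α+2)/(α+1)}(F_q^d,dx)}. -/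
/-!
Write `f ∗ dσ = E f + 𝔼 f` with `E f = f ∗ dσ - f ∗ dx`. The mean `𝔼 f` is at most
`‖f‖₁ ≤ ‖f‖_{p'}` by Jensen, where `p = α + 2` and `p' = (α + 2) / (α + 1)`. The operator `E`
multiplies the Fourier coefficient of `f` at a character `ψ ≠ 0` by `(dσ)^∨(ψ)` and kills the one
at `ψ = 0`, so by Plancherel `‖E‖_{2 → 2} ≤ B = C q^{-α/2}`; its kernel is bounded by
`A = q^d / |S| + 1 ≲ q`, so `‖E‖_{1 → ∞} ≤ A`. A dyadic real interpolation between these two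
bounds gives `‖E f‖_p^p ≲ A^α B² ‖f‖_{p'}^p`, and `A^α B² ≲ q^α q^{-α}` does not depend on `q`.
The hypothesis on the phases `m ≠ 0` covers every nontrivial character, since the characters of
`F_q^d` are exactly the maps `x ↦ χ (x ⬝ᵥ m)`.
-/

open Finset
open scoped Classical

section Convolution

variable {G : Type*} [AddCommGroup G]

/-- `f ∗ dσ` for the normalized counting measure `dσ` on `S`; `convAvg univ f` is the constant
function `𝔼 f`. -/
noncomputable def convAvg (S : Finset G) : (G → ℂ) →ₗ[ℂ] (G → ℂ) where
  toFun f x := (#S : ℂ)⁻¹ * ∑ y ∈ S, f (x - y)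
  map_add' f g := by ext x; simp [sum_add_distrib, mul_add]
  map_smul' c f := by ext x; simp [mul_sum, mul_left_comm]

lemma convAvg_apply (S : Finset G) (f : G → ℂ) (x : G) :
    convAvg S f x = (#S : ℂ)⁻¹ * ∑ y ∈ S, f (x - y) := rfl

/-- `(dσ)^∨` evaluated at a character. -/
noncomputable def charAvg (S : Finset G) (ψ : AddChar G ℂ) : ℂ :=
  (#S : ℂ)⁻¹ * ∑ y ∈ S, ψ y

lemma charAvg_zero {S : Finset G} (hS : S.Nonempty) : charAvg S 0 = 1 := by
  simp [charAvg, hS.ne_empty]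

variable [Fintype G]

lemma charAvg_univ (ψ : AddChar G ℂ) : charAvg univ ψ = if ψ = 0 then 1 else 0 := by
  rw [charAvg, AddChar.sum_eq_ite, card_univ]
  split_ifs <;> simp

lemma sum_convAvg_mul_addChar (S : Finset G) (f : G → ℂ) (ψ : AddChar G ℂ) :
    ∑ x, convAvg S f x * ψ x = charAvg S ψ * ∑ x, f x * ψ x := by
  have shift (y : G) : ∑ x, f (x - y) * ψ x = ψ y * ∑ x, f x * ψ x := by
    rw [mul_sum]
    refine Fintype.sum_equiv (Equiv.subRight y) _ _ fun x => ?_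
    rw [Equiv.subRight_apply, ← sub_add_cancel x y, AddChar.map_add_eq_mul,
      add_sub_cancel_right]
    ring
  simp only [convAvg_apply, charAvg, mul_assoc, sum_mul, ← mul_sum]
  rw [sum_comm]
  simp only [shift]

open ComplexConjugate in
lemma sum_norm_sq_sum_mul_addChar (f : G → ℂ) :
    ∑ ψ : AddChar G ℂ, ‖∑ x, f x * ψ x‖ ^ 2 = Fintype.card G * ∑ x, ‖f x‖ ^ 2 := by
  have expand (ψ : AddChar G ℂ) : ((‖∑ x, f x * ψ x‖ ^ 2 : ℝ) : ℂ) =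
      ∑ x, ∑ y, f x * conj (f y) * ψ (x - y) := by
    rw [Complex.ofReal_pow, ← Complex.mul_conj', map_sum, sum_mul_sum]
    refine sum_congr rfl fun x _ => sum_congr rfl fun y _ => ?_
    rw [map_mul, ← AddChar.map_neg_eq_conj, sub_eq_add_neg, AddChar.map_add_eq_mul]
    ring
  suffices h : ∑ ψ : AddChar G ℂ, ((‖∑ x, f x * ψ x‖ ^ 2 : ℝ) : ℂ) =
      Fintype.card G * ∑ x, ((‖f x‖ ^ 2 : ℝ) : ℂ) by exact_mod_cast h
  simp only [expand, Complex.ofReal_pow, ← Complex.mul_conj', mul_sum]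
  rw [sum_comm]
  refine sum_congr rfl fun x _ => ?_
  rw [sum_comm]
  simp only [← mul_sum, AddChar.sum_apply_eq_ite, sub_eq_zero, mul_ite, mul_zero, sum_ite_eq,
    mem_univ, if_true]
  ring

lemma sum_norm_sq_convAvg_sub_univ_le {S : Finset G} (hS : S.Nonempty) {B : ℝ}
    (hB : ∀ ψ : AddChar G ℂ, ψ ≠ 0 → ‖charAvg S ψ‖ ≤ B) (f : G → ℂ) :
    ∑ x, ‖(convAvg S - convAvg (univ : Finset G)) f x‖ ^ 2 ≤ B ^ 2 * ∑ x, ‖f x‖ ^ 2 := by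
  have coeff (ψ : AddChar G ℂ) :
      ‖∑ x, (convAvg S - convAvg (univ : Finset G)) f x * ψ x‖ ^ 2 ≤
        B ^ 2 * ‖∑ x, f x * ψ x‖ ^ 2 := by
    have hsplit : ∑ x, (convAvg S - convAvg (univ : Finset G)) f x * ψ x =
        (charAvg S ψ - charAvg univ ψ) * ∑ x, f x * ψ x := by
      simp only [LinearMap.sub_apply, Pi.sub_apply, sub_mul, sum_sub_distrib,
        sum_convAvg_mul_addChar]
    rw [hsplit, norm_mul, mul_pow, charAvg_univ]
    refine mul_le_mul_of_nonneg_right ?_ (by positivity)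
    by_cases hψ : ψ = 0
    · simp [hψ, charAvg_zero hS, sq_nonneg]
    · rw [if_neg hψ, sub_zero]
      exact pow_le_pow_left₀ (norm_nonneg _) (hB ψ hψ) 2
  have hG : (0 : ℝ) < Fintype.card G := Nat.cast_pos.2 Fintype.card_pos
  rw [← mul_le_mul_iff_right₀ hG, ← sum_norm_sq_sum_mul_addChar, mul_left_comm,
    ← sum_norm_sq_sum_mul_addChar, mul_sum]
  exact sum_le_sum fun ψ _ => coeff ψ

lemma norm_convAvg_le (S : Finset G) (f : G → ℂ) (x : G) :
    ‖convAvg S f x‖ ≤ (#S : ℝ)⁻¹ * ∑ z, ‖f z‖ := by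
  rw [convAvg_apply, norm_mul, norm_inv, Complex.norm_natCast]
  gcongr
  calc ‖∑ y ∈ S, f (x - y)‖ ≤ ∑ y ∈ S, ‖f (x - y)‖ := norm_sum_le _ _
    _ ≤ ∑ y, ‖f (x - y)‖ := sum_le_univ_sum_of_nonneg fun _ => norm_nonneg _
    _ = ∑ z, ‖f z‖ := Fintype.sum_equiv (Equiv.subLeft x) _ _ fun _ => rfl

lemma norm_convAvg_sub_univ_le (S : Finset G) (f : G → ℂ) (x : G) :
    ‖(convAvg S - convAvg (univ : Finset G)) f x‖ ≤
      (Fintype.card G / #S + 1) * ∑ z, (Fintype.card G : ℝ)⁻¹ * ‖f z‖ := by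
  have hG : (Fintype.card G : ℝ) ≠ 0 := Nat.cast_ne_zero.2 Fintype.card_ne_zero
  calc _ ≤ ‖convAvg S f x‖ + ‖convAvg univ f x‖ := norm_sub_le _ _
    _ ≤ (#S : ℝ)⁻¹ * ∑ z, ‖f z‖ + (#univ : ℝ)⁻¹ * ∑ z, ‖f z‖ :=
        add_le_add (norm_convAvg_le _ _ _) (norm_convAvg_le _ _ _)
    _ = (Fintype.card G / #S + 1) * ∑ z, (Fintype.card G : ℝ)⁻¹ * ‖f z‖ := by
        rw [card_univ, ← mul_sum, ← mul_assoc, ← add_mul]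
        congr 1
        field_simp

end Convolution

section Interpolation

variable {X Y : Type*}

lemma one_sub_two_rpow_neg_pos {α : ℝ} (hα : 0 < α) : 0 < 1 - (2 : ℝ) ^ (-α) := by
  linarith [Real.rpow_lt_one_of_one_lt_of_neg one_lt_two (neg_lt_zero.2 hα)]

lemma sum_zpow_le_of_forall_le {a : ℝ} (ha : 1 < a) (J : Finset ℤ) {N : ℤ}
    (hJ : ∀ n ∈ J, n ≤ N) : ∑ n ∈ J, a ^ n ≤ a ^ N * (a / (a - 1)) := by
  have ha1 : 0 < a - 1 := by linarith
  induction J using Finset.induction_on_max generalizing N with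
  | empty => simp only [sum_empty]; positivity
  | insert m s hlt ih =>
    have hs : ∑ n ∈ s, a ^ n ≤ a ^ (m - 1) * (a / (a - 1)) :=
      ih fun n hn => Int.le_sub_one_of_lt (hlt n hn)
    rw [sum_insert fun hm => lt_irrefl m (hlt m hm)]
    calc a ^ m + ∑ n ∈ s, a ^ n ≤ a ^ m + a ^ (m - 1) * (a / (a - 1)) := by gcongr
      _ = a ^ m * (a / (a - 1)) := by
        rw [zpow_sub_one₀ (by positivity)]
        field_simp
        ring
      _ ≤ a ^ N * (a / (a - 1)) := by
        gcongr
        exacts [ha.le, hJ m (mem_insert_self m s)]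

lemma sum_filter_zpow_rpow_le {β L : ℝ} (hβ : 0 < β) (hL : 0 < L) (J : Finset ℤ) :
    ∑ n ∈ J with (2 : ℝ) ^ n ≤ L, ((2 : ℝ) ^ n) ^ β ≤ L ^ β / (1 - 2 ^ (-β)) := by
  have h2β : 1 < (2 : ℝ) ^ β := Real.one_lt_rpow one_lt_two hβ
  have h2β' : 0 < (2 : ℝ) ^ β - 1 := by linarith
  have hlog : ∀ n ∈ J.filter fun n => (2 : ℝ) ^ n ≤ L, n ≤ Int.log 2 L := fun n hn => by
    rw [← Int.zpow_le_iff_le_log one_lt_two hL]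
    exact_mod_cast (mem_filter.1 hn).2
  simp only [← Real.rpow_zpow_comm zero_le_two]
  calc _ ≤ ((2 : ℝ) ^ β) ^ Int.log 2 L * (2 ^ β / (2 ^ β - 1)) :=
        sum_zpow_le_of_forall_le h2β _ hlog
    _ ≤ L ^ β * (2 ^ β / (2 ^ β - 1)) := by
        rw [Real.rpow_zpow_comm zero_le_two]
        gcongr
        exact_mod_cast Int.zpow_log_le_self one_lt_two hL
    _ = L ^ β / (1 - 2 ^ (-β)) := by
        rw [Real.rpow_neg zero_le_two]
        field_simp

lemma exists_zpow_two_mem_Ioc {t : ℝ} (ht : 0 < t) :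
    ∃ n : ℤ, 2 * (2 : ℝ) ^ n < t ∧ t ≤ 4 * (2 : ℝ) ^ n := by
  obtain ⟨n, hlt, hle⟩ := exists_mem_Ioc_zpow (half_pos ht) one_lt_two
  refine ⟨n, by linarith, ?_⟩
  rw [zpow_add_one₀ two_ne_zero] at hle
  linarith

lemma rpow_add_two_le_of_dyadic {α t s b lam : ℝ} (hα : 0 ≤ α) (hlam : 0 < lam)
    (hlow : 2 * lam < t) (hup : t ≤ 4 * lam) (hts : t ≤ s + b) (hb : b ≤ lam) :
    t ^ (α + 2) ≤ 4 ^ (α + 2) * (lam ^ α * s ^ 2) := by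
  calc t ^ (α + 2) ≤ (4 * lam) ^ (α + 2) := by gcongr; linarith
    _ = 4 ^ (α + 2) * (lam ^ α * lam ^ 2) := by
        rw [Real.mul_rpow (by norm_num) hlam.le, Real.rpow_add hlam, Real.rpow_two]
    _ ≤ 4 ^ (α + 2) * (lam ^ α * s ^ 2) := by gcongr; linarith

/-- The cut-off height `(A / 2 ^ n) ^ (1 / θ)` is chosen so that, for `θ = 1 / (α + 1)` and
`∑ μ ‖f‖ ^ (1 + θ) ≤ 1`, the part of `f` above it has weighted `L¹` norm at most `2 ^ n / A`. -/
noncomputable def lowPart (A θ : ℝ) (f : X → ℂ) (n : ℤ) : X → ℂ :=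
  {x | (2 : ℝ) ^ n * ‖f x‖ ^ θ ≤ A}.indicator f

lemma mul_sum_norm_sub_lowPart_le [Fintype X] {μ : X → ℝ} (hμ : ∀ x, 0 ≤ μ x) {A θ : ℝ}
    (hθ : 0 ≤ θ) (f : X → ℂ) (n : ℤ) :
    A * ∑ x, μ x * ‖(f - lowPart A θ f n) x‖ ≤ 2 ^ n * ∑ x, μ x * ‖f x‖ ^ (1 + θ) := by
  rw [lowPart, ← Set.indicator_compl, mul_sum, mul_sum]
  refine sum_le_sum fun x _ => ?_
  rw [norm_indicator_eq_indicator_norm, Set.indicator_apply, mul_left_comm,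
    mul_left_comm (2 ^ n)]
  refine mul_le_mul_of_nonneg_left ?_ (hμ x)
  split_ifs with hx
  · rw [Set.mem_compl_iff, Set.mem_ofPred_eq, not_le] at hx
    rw [Real.rpow_add' (norm_nonneg _) (by linarith), Real.rpow_one, mul_comm ‖f x‖,
      ← mul_assoc]
    exact mul_le_mul_of_nonneg_right hx.le (norm_nonneg (f x))
  · rw [mul_zero]
    positivity

lemma norm_apply_sub_lowPart_le [Fintype X] {T : (X → ℂ) →+ (Y → ℂ)} {μ : X → ℝ}
    (hμ : ∀ x, 0 ≤ μ x) {α A : ℝ} (hα : 0 < α) (hT : ∀ g y, ‖T g y‖ ≤ A * ∑ x, μ x * ‖g x‖)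
    {f : X → ℂ} (hf : ∑ x, μ x * ‖f x‖ ^ ((α + 2) / (α + 1)) ≤ 1) (n : ℤ) (y : Y) :
    ‖T (f - lowPart A (α + 1)⁻¹ f n) y‖ ≤ 2 ^ n := by
  calc _ ≤ A * ∑ x, μ x * ‖(f - lowPart A (α + 1)⁻¹ f n) x‖ := hT _ y
    _ ≤ 2 ^ n * ∑ x, μ x * ‖f x‖ ^ (1 + (α + 1)⁻¹) :=
        mul_sum_norm_sub_lowPart_le hμ (by positivity) f n
    _ ≤ 2 ^ n := by
        rw [show 1 + (α + 1)⁻¹ = (α + 2) / (α + 1) by field_simp; ring]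
        exact mul_le_of_le_one_right (by positivity) hf

lemma sum_zpow_rpow_mul_norm_lowPart_sq_le {α A : ℝ} (hα : 0 < α) (hA : 0 < A) (f : X → ℂ)
    (J : Finset ℤ) (x : X) :
    ∑ n ∈ J, ((2 : ℝ) ^ n) ^ α * ‖lowPart A (α + 1)⁻¹ f n x‖ ^ 2 ≤
      A ^ α / (1 - 2 ^ (-α)) * ‖f x‖ ^ ((α + 2) / (α + 1)) := by
  have hsq (n : ℤ) : ‖lowPart A (α + 1)⁻¹ f n x‖ ^ 2 =
      if (2 : ℝ) ^ n * ‖f x‖ ^ (α + 1)⁻¹ ≤ A then ‖f x‖ ^ 2 else 0 := by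
    simp only [lowPart, Set.indicator_apply, Set.mem_ofPred_eq]
    split_ifs <;> simp
  simp only [hsq]
  obtain hu | hu := (norm_nonneg (f x)).eq_or_lt
  · simp [← hu, Real.zero_rpow (by positivity : (α + 2) / (α + 1) ≠ 0)]
  set u := ‖f x‖
  have hv : 0 < u ^ (α + 1)⁻¹ := by positivity
  simp_rw [← le_div_iff₀ hv, mul_ite, mul_zero, ← sum_filter, ← sum_mul]
  calc _ ≤ (A / u ^ (α + 1)⁻¹) ^ α / (1 - 2 ^ (-α)) * u ^ 2 := by
        gcongr
        exact sum_filter_zpow_rpow_le hα (by positivity) J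
    _ = A ^ α / (1 - 2 ^ (-α)) * u ^ ((α + 2) / (α + 1)) := by
        rw [Real.div_rpow hA.le hv.le, ← Real.rpow_mul hu.le, ← Real.rpow_natCast,
          div_mul_eq_mul_div, div_mul_eq_mul_div, mul_div_assoc, ← Real.rpow_sub hu,
          show ((2 : ℕ) : ℝ) - (α + 1)⁻¹ * α = (α + 2) / (α + 1) by field_simp; ring]
        ring

/-- Each `y` with `T f y ≠ 0` is charged to the dyadic level `2 ^ n ≈ ‖T f y‖ / 4`, where
`T (g n) y` still carries more than a quarter of `T f y`. -/
lemma exists_finset_rpow_le_sum [Fintype Y] (T : (X → ℂ) →+ (Y → ℂ)) {α : ℝ} (hα : 0 ≤ α)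
    {f : X → ℂ} {g : ℤ → X → ℂ} (hg : ∀ n y, ‖T (f - g n) y‖ ≤ 2 ^ n) :
    ∃ J : Finset ℤ, ∀ y, ‖T f y‖ ^ (α + 2) ≤
      4 ^ (α + 2) * ∑ n ∈ J, ((2 : ℝ) ^ n) ^ α * ‖T (g n) y‖ ^ 2 := by
  choose! level hlevel using
    fun y (hy : T f y ≠ 0) => exists_zpow_two_mem_Ioc (norm_pos_iff.2 hy)
  refine ⟨univ.image level, fun y => ?_⟩
  by_cases hy : T f y = 0
  · rw [hy, norm_zero, Real.zero_rpow (by positivity)]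
    positivity
  set n := level y
  have hsplit : ‖T f y‖ ≤ ‖T (g n) y‖ + ‖T (f - g n) y‖ := by
    calc ‖T f y‖ = ‖T (g n) y + T (f - g n) y‖ := by
          rw [← Pi.add_apply, ← map_add, add_sub_cancel]
      _ ≤ _ := norm_add_le _ _
  calc ‖T f y‖ ^ (α + 2) ≤ 4 ^ (α + 2) * (((2 : ℝ) ^ n) ^ α * ‖T (g n) y‖ ^ 2) :=
        rpow_add_two_le_of_dyadic hα (by positivity) (hlevel y hy).1 (hlevel y hy).2 hsplit
          (hg n y)
    _ ≤ _ := by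
        gcongr
        exact single_le_sum (f := fun n => ((2 : ℝ) ^ n) ^ α * ‖T (g n) y‖ ^ 2)
          (fun n _ => by positivity) (mem_image_of_mem level (mem_univ y))

theorem sum_mul_norm_rpow_le_of_L1_of_L2 [Fintype X] [Fintype Y] {T : (X → ℂ) →+ (Y → ℂ)}
    {μ : X → ℝ} {ν : Y → ℝ} (hμ : ∀ x, 0 ≤ μ x) (hν : ∀ y, 0 ≤ ν y) {α A B : ℝ} (hα : 0 < α)
    (hA : 0 < A) (hT₁ : ∀ g y, ‖T g y‖ ≤ A * ∑ x, μ x * ‖g x‖)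
    (hT₂ : ∀ g, ∑ y, ν y * ‖T g y‖ ^ 2 ≤ B ^ 2 * ∑ x, μ x * ‖g x‖ ^ 2)
    {f : X → ℂ} (hf : ∑ x, μ x * ‖f x‖ ^ ((α + 2) / (α + 1)) ≤ 1) :
    ∑ y, ν y * ‖T f y‖ ^ (α + 2) ≤ 4 ^ (α + 2) / (1 - 2 ^ (-α)) * (A ^ α * B ^ 2) := by
  set g := lowPart A (α + 1)⁻¹ f
  obtain ⟨J, hJ⟩ := exists_finset_rpow_le_sum T hα.le (norm_apply_sub_lowPart_le hμ hα hT₁ hf)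
  have hK : 0 ≤ A ^ α / (1 - 2 ^ (-α)) :=
    div_nonneg (by positivity) (one_sub_two_rpow_neg_pos hα).le
  calc ∑ y, ν y * ‖T f y‖ ^ (α + 2)
      ≤ ∑ y, ν y * (4 ^ (α + 2) * ∑ n ∈ J, ((2 : ℝ) ^ n) ^ α * ‖T (g n) y‖ ^ 2) := by
        gcongr with y
        exacts [hν y, hJ y]
    _ = 4 ^ (α + 2) * ∑ n ∈ J, ((2 : ℝ) ^ n) ^ α * ∑ y, ν y * ‖T (g n) y‖ ^ 2 := by
        simp only [mul_sum]
        rw [sum_comm]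
        exact sum_congr rfl fun _ _ => sum_congr rfl fun _ _ => by ring
    _ ≤ 4 ^ (α + 2) * ∑ n ∈ J, ((2 : ℝ) ^ n) ^ α * (B ^ 2 * ∑ x, μ x * ‖g n x‖ ^ 2) := by
        gcongr with n
        exact hT₂ _
    _ = 4 ^ (α + 2) * B ^ 2 * ∑ x, μ x * ∑ n ∈ J, ((2 : ℝ) ^ n) ^ α * ‖g n x‖ ^ 2 := by
        simp only [mul_sum]
        rw [sum_comm]
        exact sum_congr rfl fun _ _ => sum_congr rfl fun _ _ => by ring
    _ ≤ 4 ^ (α + 2) * B ^ 2 *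
          ∑ x, μ x * (A ^ α / (1 - 2 ^ (-α)) * ‖f x‖ ^ ((α + 2) / (α + 1))) := by
        gcongr with x
        exacts [hμ x, sum_zpow_rpow_mul_norm_lowPart_sq_le hα hA f J x]
    _ ≤ 4 ^ (α + 2) * B ^ 2 * (A ^ α / (1 - 2 ^ (-α))) := by
        simp only [mul_left_comm (μ _), ← mul_sum]
        exact mul_le_mul_of_nonneg_left (mul_le_of_le_one_right hK hf) (by positivity)
    _ = 4 ^ (α + 2) / (1 - 2 ^ (-α)) * (A ^ α * B ^ 2) := by ring

end Interpolation

section WeightedLp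

variable {X Y : Type*} [Fintype X]

lemma norm_add_rpow_le {E : Type*} [SeminormedAddGroup E] (a b : E) {p : ℝ} (hp : 1 ≤ p) :
    ‖a + b‖ ^ p ≤ 2 ^ (p - 1) * (‖a‖ ^ p + ‖b‖ ^ p) := by
  calc ‖a + b‖ ^ p ≤ (‖a‖ + ‖b‖) ^ p := by gcongr; exact norm_add_le a b
    _ ≤ 2 ^ (p - 1) * (‖a‖ ^ p + ‖b‖ ^ p) := by
      exact_mod_cast NNReal.rpow_add_le_mul_rpow_add_rpow ‖a‖₊ ‖b‖₊ hp

lemma sum_mul_le_one_of_sum_mul_rpow_le_one {ι : Type*} {s : Finset ι} {w z : ι → ℝ}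
    (hw : ∀ i ∈ s, 0 ≤ w i) (hw₁ : ∑ i ∈ s, w i = 1) (hz : ∀ i ∈ s, 0 ≤ z i) {r : ℝ}
    (hr : 1 ≤ r) (h : ∑ i ∈ s, w i * z i ^ r ≤ 1) : ∑ i ∈ s, w i * z i ≤ 1 := by
  by_contra! h₁
  have := Real.rpow_arith_mean_le_arith_mean_rpow s w z hw hw₁ hz hr
  linarith [Real.one_lt_rpow h₁ (by linarith : 0 < r)]

lemma sum_mul_norm_smul_rpow (μ : X → ℝ) (r : ℝ) (c : ℂ) (f : X → ℂ) :
    ∑ x, μ x * ‖(c • f) x‖ ^ r = ‖c‖ ^ r * ∑ x, μ x * ‖f x‖ ^ r := by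
  simp only [Pi.smul_apply, smul_eq_mul, norm_mul, mul_sum,
    Real.mul_rpow (norm_nonneg _) (norm_nonneg _)]
  exact sum_congr rfl fun _ _ => by ring

theorem rpow_sum_le_of_sum_le_one [Fintype Y] (T : (X → ℂ) →ₗ[ℂ] (Y → ℂ)) {μ : X → ℝ}
    {ν : Y → ℝ} (hμ : ∀ x, 0 < μ x) (hν : ∀ y, 0 ≤ ν y) {p r K : ℝ} (hp : 0 < p) (hr : 0 < r)
    (hT : ∀ f, ∑ x, μ x * ‖f x‖ ^ r ≤ 1 → ∑ y, ν y * ‖T f y‖ ^ p ≤ K) (f : X → ℂ) :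
    (∑ y, ν y * ‖T f y‖ ^ p) ^ (1 / p) ≤ K ^ (1 / p) * (∑ x, μ x * ‖f x‖ ^ r) ^ (1 / r) := by
  set N := ∑ x, μ x * ‖f x‖ ^ r
  have hN : 0 ≤ N := sum_nonneg fun x _ => mul_nonneg (hμ x).le (by positivity)
  rcases hN.eq_or_lt with hN0 | hN0
  · have hf : f = 0 := by
      ext x
      have := (sum_eq_zero_iff_of_nonneg fun x _ => mul_nonneg (hμ x).le (by positivity)).1
        hN0.symm x (mem_univ x)
      simpa [(hμ x).ne', Real.rpow_eq_zero (norm_nonneg _) hr.ne'] using this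
    simp [hf, ← hN0, Real.zero_rpow hp.ne', Real.zero_rpow (inv_pos.2 hp).ne',
      Real.zero_rpow (inv_pos.2 hr).ne']
  set s := N ^ (1 / r)
  have hs : 0 < s := by positivity
  set f₁ := ((s⁻¹ : ℝ) : ℂ) • f
  have hf₁ : ∑ x, μ x * ‖f₁ x‖ ^ r = 1 := by
    rw [sum_mul_norm_smul_rpow, Complex.norm_real, Real.norm_eq_abs, abs_of_pos (inv_pos.2 hs),
      Real.inv_rpow hs.le, ← Real.rpow_mul hN, one_div_mul_cancel hr.ne', Real.rpow_one,
      inv_mul_cancel₀ hN0.ne']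
  have hT₀ (g : X → ℂ) : 0 ≤ ∑ y, ν y * ‖T g y‖ ^ p :=
    sum_nonneg fun y _ => mul_nonneg (hν y) (by positivity)
  have hTf : T f = ((s : ℝ) : ℂ) • T f₁ := by
    rw [map_smul, smul_smul, ← Complex.ofReal_mul, mul_inv_cancel₀ hs.ne', Complex.ofReal_one,
      one_smul]
  calc (∑ y, ν y * ‖T f y‖ ^ p) ^ (1 / p) = s * (∑ y, ν y * ‖T f₁ y‖ ^ p) ^ (1 / p) := by
        rw [hTf, sum_mul_norm_smul_rpow, Complex.norm_real, Real.norm_eq_abs, abs_of_pos hs,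
          Real.mul_rpow (by positivity) (hT₀ _), ← Real.rpow_mul hs.le,
          mul_one_div_cancel hp.ne', Real.rpow_one]
    _ ≤ s * K ^ (1 / p) := by
        gcongr
        exacts [hT₀ _, hT _ hf₁.le]
    _ = K ^ (1 / p) * N ^ (1 / r) := mul_comm _ _

end WeightedLp

section Main

variable {G : Type*} [AddCommGroup G] [Fintype G]

lemma sum_const_card_inv : ∑ _x : G, (Fintype.card G : ℝ)⁻¹ = 1 := by
  rw [sum_const, card_univ, nsmul_eq_mul, mul_inv_cancel₀ (by positivity)]

lemma norm_convAvg_univ_le_one {r : ℝ} (hr : 1 ≤ r) {f : G → ℂ}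
    (hf : ∑ x, (Fintype.card G : ℝ)⁻¹ * ‖f x‖ ^ r ≤ 1) (x : G) : ‖convAvg univ f x‖ ≤ 1 := by
  refine (norm_convAvg_le univ f x).trans ?_
  rw [card_univ, mul_sum]
  exact sum_mul_le_one_of_sum_mul_rpow_le_one (fun _ _ => by positivity) sum_const_card_inv
    (fun _ _ => norm_nonneg _) hr hf

theorem sum_norm_convAvg_rpow_le {S : Finset G} (hS : S.Nonempty) {α B : ℝ} (hα : 0 < α)
    (hB : ∀ ψ : AddChar G ℂ, ψ ≠ 0 → ‖charAvg S ψ‖ ≤ B) {f : G → ℂ}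
    (hf : ∑ x, (Fintype.card G : ℝ)⁻¹ * ‖f x‖ ^ ((α + 2) / (α + 1)) ≤ 1) :
    ∑ x, (Fintype.card G : ℝ)⁻¹ * ‖convAvg S f x‖ ^ (α + 2) ≤
      2 ^ (α + 1) *
        (4 ^ (α + 2) / (1 - 2 ^ (-α)) * ((Fintype.card G / #S + 1) ^ α * B ^ 2) + 1) := by
  set w := (Fintype.card G : ℝ)⁻¹
  set E := convAvg S - convAvg (univ : Finset G)
  have hw : 0 ≤ w := by positivity
  have hE : ∑ x, w * ‖E f x‖ ^ (α + 2) ≤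
      4 ^ (α + 2) / (1 - 2 ^ (-α)) * ((Fintype.card G / #S + 1) ^ α * B ^ 2) := by
    refine sum_mul_norm_rpow_le_of_L1_of_L2 (T := E.toAddMonoidHom) (fun _ => hw) (fun _ => hw)
      hα (by positivity) (norm_convAvg_sub_univ_le S) (fun g => ?_) hf
    rw [← mul_sum, ← mul_sum, mul_left_comm]
    exact mul_le_mul_of_nonneg_left (sum_norm_sq_convAvg_sub_univ_le hS hB g) hw
  have hr : 1 ≤ (α + 2) / (α + 1) := by
    rw [le_div_iff₀ (by positivity)]
    linarith
  have hmean (x : G) : ‖convAvg univ f x‖ ^ (α + 2) ≤ 1 :=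
    Real.rpow_le_one (norm_nonneg _) (norm_convAvg_univ_le_one hr hf x) (by positivity)
  calc ∑ x, w * ‖convAvg S f x‖ ^ (α + 2)
      ≤ ∑ x, w * (2 ^ (α + 1) * (‖E f x‖ ^ (α + 2) + ‖convAvg univ f x‖ ^ (α + 2))) := by
        gcongr with x
        have := norm_add_rpow_le (E f x) (convAvg univ f x) (by linarith : (1 : ℝ) ≤ α + 2)
        rwa [LinearMap.sub_apply, Pi.sub_apply, sub_add_cancel, show α + 2 - 1 = α + 1 by ring]
          at this
    _ = 2 ^ (α + 1) *
          (∑ x, w * ‖E f x‖ ^ (α + 2) + ∑ x, w * ‖convAvg univ f x‖ ^ (α + 2)) := by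
        rw [← sum_add_distrib, mul_sum]
        exact sum_congr rfl fun _ _ => by ring
    _ ≤ 2 ^ (α + 1) *
          (4 ^ (α + 2) / (1 - 2 ^ (-α)) * ((Fintype.card G / #S + 1) ^ α * B ^ 2) + 1) := by
        gcongr
        calc ∑ x, w * ‖convAvg univ f x‖ ^ (α + 2) ≤ ∑ _x : G, w * 1 := by
              gcongr with x
              exact hmean x
          _ = 1 := by rw [← sum_mul, sum_const_card_inv, mul_one]

end Main

section FiniteField

variable {F : Type*} [Field F] {d : ℕ}

def dotChar (χ : AddChar F ℂ) (m : Fin d → F) : AddChar (Fin d → F) ℂ :=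
  χ.compAddMonoidHom (AddMonoidHom.mk' (· ⬝ᵥ m) fun x y => add_dotProduct x y m)

lemma dotChar_zero (χ : AddChar F ℂ) : dotChar χ (0 : Fin d → F) = 0 := by
  ext x
  simp [dotChar]

lemma dotChar_injective {χ : AddChar F ℂ} (hχ : χ ≠ 1) :
    Function.Injective (dotChar (d := d) χ) := by
  intro m m' h
  ext j
  refine AddChar.to_mulShift_inj_of_isPrimitive (AddChar.IsPrimitive.of_ne_one hχ) ?_
  ext a
  simpa [dotChar, single_dotProduct, mul_comm] using DFunLike.congr_fun h (Pi.single j a)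

lemma dotChar_surjective [Fintype F] {χ : AddChar F ℂ} (hχ : χ ≠ 1) :
    Function.Surjective (dotChar (d := d) χ) :=
  ((Fintype.bijective_iff_injective_and_card _).2
    ⟨dotChar_injective hχ, AddChar.card_eq.symm⟩).2

end FiniteField

lemma pow_div_add_one_le {q c s : ℝ} {d : ℕ} (hq : 1 ≤ q) (hc : 0 < c)
    (hs : c * q ^ (d - 1) ≤ s) : q ^ d / s + 1 ≤ (1 / c + 1) * q := by
  have hs₀ : 0 < s := lt_of_lt_of_le (by positivity) hs
  have hqd : q ^ d / s ≤ q / c := by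
    rw [div_le_div_iff₀ hs₀ hc]
    calc q ^ d * c ≤ q ^ (d - 1 + 1) * c := by gcongr; omega
      _ = q * (c * q ^ (d - 1)) := by ring
      _ ≤ q * s := by gcongr
  calc q ^ d / s + 1 ≤ q / c + q := by gcongr
    _ = (1 / c + 1) * q := by ring

lemma rpow_mul_sq_le_of_le_mul {q A a C α : ℝ} (hq : 0 < q) (hα : 0 ≤ α) (hA : 0 ≤ A)
    (ha : 0 ≤ a) (hAq : A ≤ a * q) : A ^ α * (C * q ^ (-(α / 2))) ^ 2 ≤ a ^ α * C ^ 2 := by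
  have hq2 : (q ^ (-(α / 2))) ^ 2 = (q ^ α)⁻¹ := by
    rw [← Real.rpow_natCast, ← Real.rpow_mul hq.le, ← Real.rpow_neg hq.le]
    ring_nf
  have hqα : 0 < q ^ α := by positivity
  calc A ^ α * (C * q ^ (-(α / 2))) ^ 2 ≤ (a * q) ^ α * (C * q ^ (-(α / 2))) ^ 2 := by gcongr
    _ = a ^ α * C ^ 2 := by
      rw [Real.mul_rpow ha hq.le, mul_pow, hq2]
      field_simp

theorem statement15_general (d : ℕ) (α c C : ℝ) (hα : 0 < α) (hc : 0 < c) :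
    ∃ C' : ℝ, 0 < C' ∧
      ∀ (F : Type) [Field F] [Fintype F] (χ : AddChar F ℂ), χ ≠ 1 →
        ∀ S : Finset (Fin d → F), S.Nonempty →
          c * (Fintype.card F : ℝ) ^ (d - 1) ≤ (S.card : ℝ) →
          (∀ m : Fin d → F, m ≠ 0 →
            ‖(S.card : ℂ)⁻¹ * ∑ x ∈ S, χ (∑ j, x j * m j)‖ ≤
              C * (Fintype.card F : ℝ) ^ (-(α / 2))) →
          ∀ f : (Fin d → F) → ℂ,
            (((Fintype.card F : ℝ) ^ d)⁻¹ *
                ∑ x : Fin d → F, ‖(S.card : ℂ)⁻¹ * ∑ y ∈ S, f (x - y)‖ ^ (α + 2)) ^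
                ((1 : ℝ) / (α + 2)) ≤
              C' * (((Fintype.card F : ℝ) ^ d)⁻¹ *
                  ∑ x : Fin d → F, ‖f x‖ ^ ((α + 2) / (α + 1))) ^ ((α + 1) / (α + 2)) := by
  have hr := one_sub_two_rpow_neg_pos hα
  set K : ℝ := 2 ^ (α + 1) * (4 ^ (α + 2) / (1 - 2 ^ (-α)) * ((1 / c + 1) ^ α * C ^ 2) + 1)
  refine ⟨K ^ (1 / (α + 2)), by positivity, fun F _ _ χ hχ S hS hScard hdecay f => ?_⟩
  set q : ℝ := (Fintype.card F : ℝ)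
  have hq : 1 ≤ q := Nat.one_le_cast.2 Fintype.card_pos
  have hcard : (Fintype.card (Fin d → F) : ℝ) = q ^ d := by simp [q]
  have hB (ψ : AddChar (Fin d → F) ℂ) (hψ : ψ ≠ 0) : ‖charAvg S ψ‖ ≤ C * q ^ (-(α / 2)) := by
    obtain ⟨m, rfl⟩ := dotChar_surjective hχ ψ
    exact hdecay m (by rintro rfl; exact hψ (dotChar_zero χ))
  have hAB := rpow_mul_sq_le_of_le_mul (C := C) (by positivity) hα.le (by positivity)
    (by positivity) (pow_div_add_one_le hq hc hScard)
  have key := rpow_sum_le_of_sum_le_one (convAvg S) (μ := fun _ => (q ^ d)⁻¹)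
    (ν := fun _ => (q ^ d)⁻¹) (fun _ => by positivity) (fun _ => by positivity)
    (by linarith : 0 < α + 2) (by positivity : 0 < (α + 2) / (α + 1)) (K := K) (fun g hg => ?_) f
  · simpa [← mul_sum, one_div_div, convAvg_apply] using key
  · rw [← hcard] at hg ⊢
    refine (sum_norm_convAvg_rpow_le hS hα hB hg).trans ?_
    rw [hcard]
    exact mul_le_mul_of_nonneg_left
      (add_le_add (mul_le_mul_of_nonneg_left hAB (div_nonneg (by positivity) hr.le)) le_rfl)
      (by positivity)

/-- averaging bound from Fourier decay. If `|S| ≥ c q^{d−1}` and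
`|(dσ)^∨(m)| ≤ C q^{−α/2}` for all `m ≠ 0`, then
`‖f ∗ dσ‖_{L^{α+2}(dx)} ≤ C' ‖f‖_{L^{(α+2)/(α+1)}(dx)}` with `C'` independent of `q`. -/
theorem statement15 (d : ℕ) (hd : 1 ≤ d) (α c C : ℝ) (hα : 0 < α) (hc : 0 < c) (hC : 0 < C) :
    ∃ C' : ℝ, 0 < C' ∧
      ∀ (F : Type) [Field F] [Fintype F] (χ : AddChar F ℂ), χ ≠ 1 →
        ∀ S : Finset (Fin d → F), S.Nonempty →
          c * (Fintype.card F : ℝ) ^ (d - 1) ≤ (S.card : ℝ) →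
          (∀ m : Fin d → F, m ≠ 0 →
            ‖(S.card : ℂ)⁻¹ * ∑ x ∈ S, χ (∑ j, x j * m j)‖ ≤
              C * (Fintype.card F : ℝ) ^ (-(α / 2))) →
          ∀ f : (Fin d → F) → ℂ,
            (((Fintype.card F : ℝ) ^ d)⁻¹ *
                ∑ x : Fin d → F, ‖(S.card : ℂ)⁻¹ * ∑ y ∈ S, f (x - y)‖ ^ (α + 2)) ^
                ((1 : ℝ) / (α + 2)) ≤
              C' * (((Fintype.card F : ℝ) ^ d)⁻¹ *
                  ∑ x : Fin d → F, ‖f x‖ ^ ((α + 2) / (α + 1))) ^ ((α + 1) / (α + 2)) :=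
  statement15_general d α c C hα hc
end
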